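/- arXiv:2510.10967 — 5 statements merged into one kernel-verified Lean document; each statement's English description precedes it below -/
import Mathlib

section
/- For every positive integer k and every affine subspace A of 𝔽₂^{2k} of dimension d = dim A, the cardinality |A ∩ S_k| satisfies: |A ∩ S_k| ≤ 2^d if d < k; |A ∩ S_k| ≤ 2^{d-1} + 2^{k-2} if k ≤ d < 2k-1; |A ∩ S_k| ≤ 2^{2k-2} if d = 2k-1; and |A ∩ S_k| ≤ 2^{2k-1} - 2^{k-1} if d = 2k. -/
/-- The quadratic form `q_k(x) = ∑_{i=1}^k x_i · x_{k+i}` on `𝔽₂^{2k}`. -/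
def qForm (k : ℕ) (x : Fin (2 * k) → ZMod 2) : ZMod 2 :=
  ∑ i : Fin k, x ⟨i.1, by have := i.2; omega⟩ * x ⟨k + i.1, by have := i.2; omega⟩

/-- `S_k = {x ∈ 𝔽₂^{2k} : q_k(x) = 1}`. -/
def Sset (k : ℕ) : Set (Fin (2 * k) → ZMod 2) := {x | qForm k x = 1}

/-- `A` is an affine subspace of dimension `d`: a translate `a + W` of a linear
subspace `W` with `dim W = d`. -/
def IsAffineOfDim {V : Type*} [AddCommGroup V] [Module (ZMod 2) V]
    (A : Set V) (d : ℕ) : Prop :=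
  ∃ (a : V) (W : Submodule (ZMod 2) V),
    Module.finrank (ZMod 2) W = d ∧ A = (a + ·) '' (W : Set V)

/-!
Write `A = c + W` with `dim W = d` and `T(c) = ∑_{x ∈ W} (-1)^{q(c + x)}`, so that
`2 |A ∩ S_k| = |W| - T(c)`. Expanding `T(c)²` and substituting `y = x + z` collapses the double
sum onto the radical `R = W ∩ W^⊥` of the polar form `B`, on which `q + B(c, ·)` is additive;
hence `T(c)²` is `0` or `|W| |R| = 2^{d + m}`, where `m = dim R ≤ 2k - d` as `B` is nondegenerate.
If `d + m = 2k`, then `T` only takes the values `0, ±2^k`, and comparing `∑_c T(c) = |W| 2^k`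
(the Gauss sum of `q_k` is `2^k`) with `∑_c T(c)² = |W| 2^{2k}` shows that `-2^k` never occurs.
So a negative `T(c)` forces the even number `d + m` to be at most `2k - 2`, which gives
`T(c) ≥ -2^{k-1}` in general and `T(c) ≥ 0` for `d = 2k - 1`; for `d = 2k`, `T(c) = 2^k`.
-/

open Module QuadraticMap LinearMap.BilinForm

noncomputable section

open scoped Classical

def signChar : AddChar (ZMod 2) ℤ := AddChar.zmodChar 2 (by norm_num : (-1 : ℤ) ^ 2 = 1)

lemma signChar_apply (t : ZMod 2) : signChar t = if t = 1 then -1 else 1 := by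
  fin_cases t <;> rfl

lemma signChar_eq_one_iff {t : ZMod 2} : signChar t = 1 ↔ t = 0 := by
  rw [signChar_apply]; revert t; decide

lemma sum_signChar_of_map_add {G : Type*} [AddGroup G] [Fintype G] {f : G → ZMod 2}
    (hf : ∀ a b, f (a + b) = f a + f b) :
    ∑ x, signChar (f x) = if ∀ x, f x = 0 then (Fintype.card G : ℤ) else 0 := by
  have := (signChar.compAddMonoidHom (AddMonoidHom.mk' f hf)).sum_eq_ite
  simpa [AddChar.eq_zero_iff, signChar_eq_one_iff] using this

lemma card_eq_two_pow_finrank {U : Type*} [AddCommGroup U] [Module (ZMod 2) U] [Fintype U] :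
    Fintype.card U = 2 ^ finrank (ZMod 2) U := by
  rw [Module.card_eq_pow_finrank (K := ZMod 2), ZMod.card]

lemma even_of_sq_eq_two_pow {a : ℤ} {n : ℕ} (h : a ^ 2 = 2 ^ n) : Even n := by
  have h' : a.natAbs ^ 2 = 2 ^ n := by exact_mod_cast (Int.natAbs_sq a).trans h
  obtain ⟨j, -, hj⟩ := (Nat.dvd_prime_pow Nat.prime_two).mp (Dvd.intro_left _ (sq a.natAbs ▸ h'))
  rw [hj, ← pow_mul] at h'
  exact ⟨j, by rw [← Nat.pow_right_injective le_rfl h']; ring⟩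

section CosetSum

variable {V : Type*} [AddCommGroup V] [Module (ZMod 2) V] [Fintype V]

def cosetSum (f : V → ZMod 2) (W : Submodule (ZMod 2) V) (c : V) : ℤ :=
  ∑ x : W, signChar (f (c + x))

lemma two_mul_ncard_inter_eq (f : V → ZMod 2) (W : Submodule (ZMod 2) V) (c : V) :
    2 * (((c + ·) '' (W : Set V) ∩ {x | f x = 1}).ncard : ℤ) =
      Fintype.card W - cosetSum f W c := by
  have himage : (c + ·) '' (W : Set V) ∩ {x | f x = 1} =
      (fun x : W ↦ c + x) '' {x | f (c + x) = 1} := by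
    ext x
    constructor
    · rintro ⟨⟨w, hw, rfl⟩, hx⟩
      exact ⟨⟨w, hw⟩, hx, rfl⟩
    · rintro ⟨w, hw, rfl⟩
      exact ⟨⟨w, w.2, rfl⟩, hw⟩
  have hinj : Function.Injective (fun x : W ↦ c + x) := fun x y h ↦
    Subtype.ext (add_left_cancel h)
  rw [himage, Set.ncard_image_of_injective _ hinj, Set.ncard_eq_toFinset_card',
    Set.toFinset_ofPred, cosetSum, ← Finset.card_univ]
  simp only [signChar_apply, Finset.sum_ite, Finset.sum_const, smul_neg, nsmul_eq_mul, mul_one]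
  rw [← Finset.card_filter_add_card_filter_not (fun x : W ↦ f (c + x) = 1) (s := Finset.univ)]
  push_cast
  ring

lemma neg_two_pow_finrank_le_cosetSum (f : V → ZMod 2) (W : Submodule (ZMod 2) V) (c : V) :
    -2 ^ finrank (ZMod 2) W ≤ cosetSum f W c := by
  have hcard : (Fintype.card W : ℤ) = 2 ^ finrank (ZMod 2) W := by
    exact_mod_cast card_eq_two_pow_finrank
  rw [← hcard, cosetSum, ← Finset.card_univ, ← nsmul_one, ← smul_neg, ← Finset.sum_const]
  exact Finset.sum_le_sum fun x _ ↦ by rw [signChar_apply]; split_ifs <;> norm_num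

lemma cosetSum_top (f : V → ZMod 2) (c : V) : cosetSum f ⊤ c = ∑ x, signChar (f x) := by
  rw [cosetSum]
  exact Fintype.sum_equiv
    ((Equiv.subtypeUnivEquiv fun _ ↦ Submodule.mem_top).trans (Equiv.addLeft c)) _ _ fun _ ↦ rfl

lemma sum_cosetSum (f : V → ZMod 2) (W : Submodule (ZMod 2) V) :
    ∑ c, cosetSum f W c = Fintype.card W * ∑ x, signChar (f x) := by
  calc ∑ c, cosetSum f W c = ∑ x : W, ∑ c, signChar (f (c + x)) := Finset.sum_comm
    _ = ∑ x : W, ∑ y, signChar (f y) := Finset.sum_congr rfl fun x _ ↦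
        Fintype.sum_equiv (Equiv.addRight (x : V)) _ _ fun _ ↦ rfl
    _ = _ := by simp

variable (Q : QuadraticForm (ZMod 2) V) (W : Submodule (ZMod 2) V)

def polarRadical : Submodule (ZMod 2) W := (orthogonal (polarBilin Q) W).comap W.subtype

lemma cosetSum_sq (c : V) :
    cosetSum Q W c ^ 2 =
      Fintype.card W * ∑ z : polarRadical Q W, signChar (Q z + polar Q c z) := by
  have hpair (x z : W) : signChar (Q (c + x)) * signChar (Q (c + ↑(x + z))) =
      signChar (Q z + polar Q c z) * signChar (polar Q x z) := by
    rw [← AddChar.map_add_eq_mul, ← AddChar.map_add_eq_mul, Submodule.coe_add, ← add_assoc,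
      QuadraticMap.map_add Q (c + x), polar_add_left]
    congr 1
    have h2 : (2 : ZMod 2) = 0 := rfl
    linear_combination (Q (c + x)) * h2
  have hinner (z : W) : ∑ x : W, signChar (polar Q x z) =
      if (z : V) ∈ orthogonal (polarBilin Q) W then (Fintype.card W : ℤ) else 0 := by
    rw [sum_signChar_of_map_add (fun a b ↦ by simp [polar_add_left])]
    simp [mem_orthogonal_iff]
  calc cosetSum Q W c ^ 2
      = ∑ x : W, ∑ z : W, signChar (Q (c + x)) * signChar (Q (c + ↑(x + z))) := by
        rw [_root_.sq, cosetSum, Finset.sum_mul_sum]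
        exact Finset.sum_congr rfl fun x _ ↦
          (Fintype.sum_equiv (Equiv.addLeft x) _ _ fun _ ↦ rfl).symm
    _ = ∑ z : W, signChar (Q z + polar Q c z) * ∑ x : W, signChar (polar Q x z) := by
        rw [Finset.sum_comm]
        simp_rw [hpair, Finset.mul_sum]
    _ = _ := by
        simp_rw [hinner, mul_ite, mul_zero, ← Finset.sum_filter, Finset.mul_sum]
        rw [Finset.sum_subtype _ (p := (· ∈ polarRadical Q W)) (by simp [polarRadical])]
        exact Finset.sum_congr rfl fun z _ ↦ mul_comm _ _

lemma cosetSum_sq_eq_zero_or (c : V) :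
    cosetSum Q W c ^ 2 = 0 ∨
      cosetSum Q W c ^ 2 = Fintype.card W * Fintype.card (polarRadical Q W) := by
  have hadd (a b : polarRadical Q W) : Q ↑↑(a + b) + polar Q c ↑↑(a + b) =
      (Q a + polar Q c a) + (Q b + polar Q c b) := by
    have hab : polar Q a b = 0 := b.2 a a.1.2
    simp only [Submodule.coe_add, QuadraticMap.map_add Q, polar_add_right, hab]
    ring
  rw [cosetSum_sq, sum_signChar_of_map_add hadd]
  split_ifs <;> simp

lemma sq_cosetSum_eq_two_pow {c : V} (hT : cosetSum Q W c ≠ 0) :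
    cosetSum Q W c ^ 2 = 2 ^ (finrank (ZMod 2) W + finrank (ZMod 2) (polarRadical Q W)) := by
  rcases cosetSum_sq_eq_zero_or Q W c with h | h
  · exact absurd (pow_eq_zero_iff two_ne_zero |>.mp h) hT
  · rw [h, pow_add]
    simp [card_eq_two_pow_finrank]

variable {Q}

lemma sum_cosetSum_sq (hQ : (polarBilin Q).Nondegenerate) :
    ∑ c, cosetSum Q W c ^ 2 = Fintype.card W * Fintype.card V := by
  have hdual (z : V) :
      ∑ c, signChar (polar Q c z) = if z = 0 then (Fintype.card V : ℤ) else 0 := by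
    rw [sum_signChar_of_map_add (fun a b ↦ polar_add_left (Q := Q) a b z)]
    exact if_congr ⟨hQ.2 z, fun h c ↦ h ▸ polar_zero_right Q c⟩ rfl rfl
  simp_rw [cosetSum_sq, ← Finset.mul_sum]
  rw [Finset.sum_comm]
  simp_rw [AddChar.map_add_eq_mul, ← Finset.mul_sum, hdual, ZeroMemClass.coe_eq_zero, mul_ite,
    mul_zero, Finset.sum_ite_eq', Finset.mem_univ, if_true, ZeroMemClass.coe_zero,
    QuadraticMap.map_zero, AddChar.map_zero_eq_one, one_mul]

lemma cosetSum_nonneg (hQ : (polarBilin Q).Nondegenerate) (hG₀ : 0 ≤ ∑ x, signChar (Q x))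
    (hG : (∑ x, signChar (Q x)) ^ 2 = Fintype.card V)
    (hW : Fintype.card W * Fintype.card (polarRadical Q W) = Fintype.card V) (c : V) :
    0 ≤ cosetSum Q W c := by
  set g := ∑ x, signChar (Q x)
  have hterm (x : V) : 0 ≤ cosetSum Q W x * (cosetSum Q W x - g) := by
    rcases cosetSum_sq_eq_zero_or Q W x with h | h
    · simp [pow_eq_zero_iff two_ne_zero |>.mp h]
    · rcases sq_eq_sq_iff_eq_or_eq_neg.mp (h.trans (by rw [hG]; exact_mod_cast hW : _ = g ^ 2))
        with h' | h' <;> rw [h'] <;> nlinarith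
  have hsum : ∑ x, cosetSum Q W x * (cosetSum Q W x - g) = 0 := by
    simp only [mul_sub, Finset.sum_sub_distrib, ← Finset.sum_mul, ← _root_.sq,
      sum_cosetSum_sq W hQ, sum_cosetSum, ← hG]
    ring
  rcases mul_eq_zero.mp ((Finset.sum_eq_zero_iff_of_nonneg fun x _ ↦ hterm x).mp hsum c
    (Finset.mem_univ c)) with h | h <;> linarith

end CosetSum

def halves (k : ℕ) : Fin k ⊕ Fin k ≃ Fin (2 * k) :=
  finSumFinEquiv.trans (finCongr (two_mul k).symm)

lemma qForm_eq_sum_halves (k : ℕ) (x : Fin (2 * k) → ZMod 2) :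
    qForm k x = ∑ i, x (halves k (.inl i)) * x (halves k (.inr i)) := rfl

section Hyperbolic

variable (k : ℕ)

def qQuadraticForm : QuadraticForm (ZMod 2) (Fin (2 * k) → ZMod 2) :=
  ∑ i, linMulLin (LinearMap.proj (halves k (.inl i))) (LinearMap.proj (halves k (.inr i)))

@[simp]
lemma coe_qQuadraticForm : ⇑(qQuadraticForm k) = qForm k := by
  ext x
  simp [qQuadraticForm, qForm_eq_sum_halves, QuadraticMap.linMulLin_apply]

variable {k}

lemma polar_qForm_single (x : Fin (2 * k) → ZMod 2) (s : Fin k ⊕ Fin k) :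
    polar (qForm k) x (Pi.single (halves k s.swap) 1) = x (halves k s) := by
  simp only [polar, qForm_eq_sum_halves, Pi.add_apply, Pi.single_apply,
    (halves k).injective.eq_iff]
  rcases s with i | i <;> simp [← Finset.sum_sub_distrib, mul_add, add_mul]

lemma nondegenerate_polarBilin_qQuadraticForm :
    (polarBilin (qQuadraticForm k)).Nondegenerate := by
  refine LinearMap.BilinForm.Nondegenerate.ofSeparatingLeft fun x hx ↦ funext fun j ↦ ?_
  rw [← (halves k).apply_symm_apply j, ← polar_qForm_single x, ← coe_qQuadraticForm]
  exact hx _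

lemma sum_signChar_qForm : ∑ x, signChar (qForm k x) = 2 ^ k := by
  let e : (Fin k → ZMod 2) × (Fin k → ZMod 2) ≃ (Fin (2 * k) → ZMod 2) :=
    (Equiv.sumArrowEquivProdArrow _ _ _).symm.trans ((halves k).arrowCongr (Equiv.refl _))
  have he (u v : Fin k → ZMod 2) : qForm k (e (u, v)) = u ⬝ᵥ v := by
    simp [e, qForm_eq_sum_halves, dotProduct]
  have hinner (u : Fin k → ZMod 2) : ∑ v, signChar (u ⬝ᵥ v) = if u = 0 then 2 ^ k else 0 := by
    rw [sum_signChar_of_map_add (dotProduct_add u)]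
    simp [dotProduct_eq_zero_iff]
  rw [← e.sum_comp, Fintype.sum_prod_type]
  simp [he, hinner]

lemma finrank_add_finrank_polarRadical_add_two_le (W : Submodule (ZMod 2) (Fin (2 * k) → ZMod 2))
    {c : Fin (2 * k) → ZMod 2} (hT : cosetSum (qQuadraticForm k) W c < 0) :
    finrank (ZMod 2) W + finrank (ZMod 2) (polarRadical (qQuadraticForm k) W) + 2 ≤ 2 * k := by
  have hQ := nondegenerate_polarBilin_qQuadraticForm (k := k)
  have hle :
      finrank (ZMod 2) (polarRadical (qQuadraticForm k) W) ≤ 2 * k - finrank (ZMod 2) W := by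
    calc _ = finrank (ZMod 2) ((polarRadical (qQuadraticForm k) W).map W.subtype) :=
          (Submodule.finrank_map_subtype_eq _ _).symm
      _ ≤ finrank (ZMod 2) (orthogonal (polarBilin (qQuadraticForm k)) W) :=
          Submodule.finrank_mono (Submodule.map_comap_le _ _)
      _ = _ := by rw [finrank_orthogonal hQ W, Module.finrank_fin_fun]
  have hne :
      finrank (ZMod 2) W + finrank (ZMod 2) (polarRadical (qQuadraticForm k) W) ≠ 2 * k := by
    intro h
    refine hT.not_ge (cosetSum_nonneg W hQ ?_ ?_ ?_ c) <;>
      simp [sum_signChar_qForm, card_eq_two_pow_finrank, ← pow_add, h, ← pow_mul, mul_comm]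
  obtain ⟨r, hr⟩ := even_of_sq_eq_two_pow (sq_cosetSum_eq_two_pow _ W hT.ne)
  have hW := Submodule.finrank_le W
  rw [Module.finrank_fin_fun] at hW
  omega

lemma neg_two_pow_le_two_mul_cosetSum (W : Submodule (ZMod 2) (Fin (2 * k) → ZMod 2))
    (c : Fin (2 * k) → ZMod 2) : -2 ^ k ≤ 2 * cosetSum (qQuadraticForm k) W c := by
  rcases le_or_gt 0 (cosetSum (qQuadraticForm k) W c) with hT | hT
  · linarith [pow_pos (two_pos : (0 : ℤ) < 2) k]
  · have hdim := finrank_add_finrank_polarRadical_add_two_le W hT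
    have hsq : (2 * cosetSum (qQuadraticForm k) W c) ^ 2 ≤ (2 ^ k) ^ 2 := by
      rw [mul_pow, sq_cosetSum_eq_two_pow _ W hT.ne, ← pow_mul, ← pow_add, add_comm 2 _]
      exact pow_le_pow_right₀ one_le_two (by omega)
    exact (abs_le_of_sq_le_sq' hsq (by positivity)).1

lemma cosetSum_nonneg_of_two_mul_le (W : Submodule (ZMod 2) (Fin (2 * k) → ZMod 2))
    (hW : 2 * k ≤ finrank (ZMod 2) W + 1) (c : Fin (2 * k) → ZMod 2) :
    0 ≤ cosetSum (qQuadraticForm k) W c := by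
  by_contra! hT
  have := finrank_add_finrank_polarRadical_add_two_le W hT
  omega

lemma two_mul_ncard_inter_Sset (W : Submodule (ZMod 2) (Fin (2 * k) → ZMod 2))
    (c : Fin (2 * k) → ZMod 2) :
    2 * (((c + ·) '' (W : Set _) ∩ Sset k).ncard : ℝ) =
      2 ^ finrank (ZMod 2) W - cosetSum (qQuadraticForm k) W c := by
  have hS : {x | qQuadraticForm k x = 1} = Sset k := by simp [Sset]
  have h := two_mul_ncard_inter_eq (qQuadraticForm k) W c
  rw [card_eq_two_pow_finrank, hS] at h
  exact_mod_cast h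

end Hyperbolic

end

theorem stmt_0 (k : ℕ) (hk : 0 < k) (d : ℕ)
    (A : Set (Fin (2 * k) → ZMod 2)) (hA : IsAffineOfDim A d) :
    (d < k → ((A ∩ Sset k).ncard : ℝ) ≤ 2 ^ (d : ℤ)) ∧
    (k ≤ d ∧ d < 2 * k - 1 →
      ((A ∩ Sset k).ncard : ℝ) ≤ 2 ^ ((d : ℤ) - 1) + 2 ^ ((k : ℤ) - 2)) ∧
    (d = 2 * k - 1 → ((A ∩ Sset k).ncard : ℝ) ≤ 2 ^ (2 * (k : ℤ) - 2)) ∧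
    (d = 2 * k → ((A ∩ Sset k).ncard : ℝ) ≤ 2 ^ (2 * (k : ℤ) - 1) - 2 ^ ((k : ℤ) - 1)) := by
  obtain ⟨c, W, rfl, rfl⟩ := hA
  have hcount := two_mul_ncard_inter_Sset W c
  have h2k : (2 : ℝ) ^ (2 * (k : ℤ)) = 2 ^ (2 * k) := by norm_cast
  simp only [zpow_sub₀ (two_ne_zero' ℝ), zpow_natCast, h2k]
  refine ⟨fun _ ↦ ?_, fun _ ↦ ?_, fun hd ↦ ?_, fun hd ↦ ?_⟩
  · have : -(2 : ℝ) ^ finrank (ZMod 2) W ≤ cosetSum (qQuadraticForm k) W c := by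
      exact_mod_cast neg_two_pow_finrank_le_cosetSum _ W c
    linarith
  · have : -(2 : ℝ) ^ k ≤ 2 * cosetSum (qQuadraticForm k) W c := by
      exact_mod_cast neg_two_pow_le_two_mul_cosetSum W c
    linarith
  · have : (0 : ℝ) ≤ cosetSum (qQuadraticForm k) W c := by
      exact_mod_cast cosetSum_nonneg_of_two_mul_le W (by omega) c
    have hd' : (2 : ℝ) ^ (2 * k) = 2 * 2 ^ finrank (ZMod 2) W := by
      rw [hd, ← pow_succ']; congr 1; omega
    linarith
  · have hW : W = ⊤ := Submodule.eq_top_of_finrank_eq (by rw [hd, Module.finrank_fin_fun])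
    have hT : cosetSum (qQuadraticForm k) W c = 2 ^ k := by
      rw [hW, cosetSum_top, coe_qQuadraticForm, sum_signChar_qForm]
    rw [hT, hd] at hcount
    push_cast at hcount
    linarith
end

section
/- Let d ≥ k > 1 be integers and let A be a d-dimensional affine subspace of 𝔽₂^{2k}. Then F := π₁(A) is an affine subspace of 𝔽₂², and there exist a linear subspace W' of 𝔽₂^{2k-2} with dim W' = d - dim F and, for each σ ∈ F, an affine subspace A'_σ ⊆ π₀(A) of 𝔽₂^{2k-2} which is a translation of W', such that A ∩ R_k is the disjoint union over σ ∈ F of the sets (A'_σ ∩ S_{k-1}) ⊗ σ when σ = (1,1) and (A'_σ ∩ R_{k-1}) ⊗ σ when σ ≠ (1,1), and A ∩ S_k is the disjoint union over σ ∈ F of the sets (A'_σ ∩ R_{k-1}) ⊗ σ when σ = (1,1) and (A'_σ ∩ S_{k-1}) ⊗ σ when σ ≠ (1,1). -/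
/-- `R_k = {x ∈ 𝔽₂^{2k} : q_k(x) = 0}`. -/
def Rset (k : ℕ) : Set (Fin (2 * k) → ZMod 2) := {x | qForm k x = 0}

/-- Writing `w ∈ 𝔽₂^{2k}` as `w = (x, a, y, b)` with `x, y ∈ 𝔽₂^{k-1}` and
`a, b ∈ 𝔽₂`, the root map `π₀(x,a,y,b) = (x,y) ∈ 𝔽₂^{2(k-1)}`. -/
def proj0 (k : ℕ) (w : Fin (2 * k) → ZMod 2) : Fin (2 * (k - 1)) → ZMod 2 :=
  fun i =>
    if h : i.1 < k - 1 then w ⟨i.1, by have := i.2; omega⟩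
    else w ⟨i.1 + 1, by have := i.2; omega⟩

/-- The suffix map `π₁(x,a,y,b) = (a,b) ∈ 𝔽₂²`. -/
def proj1 (k : ℕ) (w : Fin (2 * k) → ZMod 2) : ZMod 2 × ZMod 2 :=
  if h : 0 < k then (w ⟨k - 1, by omega⟩, w ⟨2 * k - 1, by omega⟩) else 0

/-- For `X ⊆ 𝔽₂^{2(k-1)}` and a suffix `σ = (a,b) ∈ 𝔽₂²`,
`X ⊗ σ = {(x,a,y,b) : (x,y) ∈ X} ⊆ 𝔽₂^{2k}`. -/
def tensorSuffix (k : ℕ) (X : Set (Fin (2 * (k - 1)) → ZMod 2))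
    (σ : ZMod 2 × ZMod 2) : Set (Fin (2 * k) → ZMod 2) :=
  {w | proj0 k w ∈ X ∧ proj1 k w = σ}

/-! Since `q_k(x,a,y,b) = q_{k-1}(x,y) + ab`, whether a point of `A` lies in `R_k` or `S_k` is
decided by its suffix `σ = (a,b)` together with whether its root `(x,y)` lies in `R_{k-1}` or
`S_{k-1}`, the roles being swapped exactly when `ab = 1`. As `w ↦ (π₀ w, π₁ w)` is injective, `A`
is the disjoint union of the sets `A'_σ ⊗ σ` with `A'_σ = π₀(A ∩ π₁⁻¹{σ})`. For `A = a + W` each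
`A'_σ` is a translate of `W' = π₀(W ∩ ker π₁)`, and rank–nullity for `π₁` on `W`, with `π₀`
injective on `ker π₁`, gives `dim W' + dim π₁(W) = dim W`. -/

section LinearAlgebra

variable {K V V₁ V₂ : Type*} [Field K] [AddCommGroup V] [Module K V] [AddCommGroup V₁]
  [Module K V₁] [AddCommGroup V₂] [Module K V₂]

theorem finrank_map_add_finrank_inf_ker [FiniteDimensional K V] (f : V →ₗ[K] V₁)
    (W : Submodule K V) :
    Module.finrank K (W.map f) + Module.finrank K ↥(W ⊓ LinearMap.ker f) = Module.finrank K W := by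
  have h := (f.domRestrict W).finrank_range_add_finrank_ker
  rw [LinearMap.range_domRestrict, LinearMap.ker_domRestrict, ← Submodule.finrank_map_subtype_eq,
    Submodule.map_comap_subtype] at h
  exact h

theorem finrank_map_inf_ker_add_finrank_map [FiniteDimensional K V] {f : V →ₗ[K] V₁}
    {g : V →ₗ[K] V₂} (hfg : LinearMap.ker f ⊓ LinearMap.ker g = ⊥) (W : Submodule K V) :
    Module.finrank K ((W ⊓ LinearMap.ker f).map g) + Module.finrank K (W.map f) =
      Module.finrank K W := by
  have hg := finrank_map_add_finrank_inf_ker g (W ⊓ LinearMap.ker f)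
  rw [inf_assoc, hfg, inf_bot_eq, finrank_bot, add_zero] at hg
  rw [hg, add_comm, finrank_map_add_finrank_inf_ker]

end LinearAlgebra

section AffineSets

variable {R M N : Type*} [Ring R] [AddCommGroup M] [Module R M] [AddCommGroup N] [Module R N]

theorem LinearMap.image_translate_submodule (f : M →ₗ[R] N) (a : M) (W : Submodule R M) :
    f '' ((a + ·) '' (W : Set M)) = (f a + ·) '' (W.map f : Set N) := by
  rw [Set.image_image, Submodule.map_coe, Set.image_image]
  simp only [map_add]

theorem translate_submodule_inter_preimage_singleton {M₁ : Type*} [AddCommGroup M₁] [Module R M₁]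
    (f : M →ₗ[R] M₁) {a w₀ : M} {W : Submodule R M} (hw₀ : w₀ ∈ (a + ·) '' (W : Set M)) :
    (a + ·) '' (W : Set M) ∩ f ⁻¹' {f w₀} = (w₀ + ·) '' (↑(W ⊓ LinearMap.ker f) : Set M) := by
  obtain ⟨v₀, hv₀, rfl⟩ := hw₀
  ext w
  simp only [Set.image_add_left, Set.mem_inter_iff, Set.mem_preimage, Set.mem_singleton_iff,
    SetLike.mem_coe, Submodule.mem_inf, LinearMap.mem_ker, map_add, map_neg, neg_add_eq_zero]
  rw [show -(a + v₀) + w = -a + w - v₀ by abel, Submodule.sub_mem_iff_left W hv₀, eq_comm]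

end AffineSets

def proj0ₗ (k : ℕ) : (Fin (2 * k) → ZMod 2) →ₗ[ZMod 2] (Fin (2 * (k - 1)) → ZMod 2) where
  toFun := proj0 k
  map_add' v w := by funext i; simp only [proj0, Pi.add_apply]; split_ifs <;> rfl
  map_smul' c w := by funext i; simp only [proj0, Pi.smul_apply]; split_ifs <;> rfl

def proj1ₗ (k : ℕ) : (Fin (2 * k) → ZMod 2) →ₗ[ZMod 2] ZMod 2 × ZMod 2 where
  toFun := proj1 k
  map_add' v w := by simp only [proj1]; split_ifs <;> simp
  map_smul' c w := by simp only [proj1]; split_ifs <;> simp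

theorem coe_proj0ₗ (k : ℕ) : ⇑(proj0ₗ k) = proj0 k := rfl

theorem coe_proj1ₗ (k : ℕ) : ⇑(proj1ₗ k) = proj1 k := rfl

theorem eq_of_proj0_eq_of_proj1_eq {k : ℕ} (hk : 0 < k) {w w' : Fin (2 * k) → ZMod 2}
    (h0 : proj0 k w = proj0 k w') (h1 : proj1 k w = proj1 k w') : w = w' := by
  simp only [proj1, dif_pos hk, Prod.mk.injEq] at h1
  funext ⟨i, hi⟩
  rcases lt_trichotomy i (k - 1) with hlt | rfl | hgt
  · simpa [proj0, hlt] using congrFun h0 ⟨i, by omega⟩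
  · exact h1.1
  · obtain rfl | hlt := eq_or_lt_of_le (show i ≤ 2 * k - 1 by omega)
    · exact h1.2
    · have h := congrFun h0 ⟨i - 1, by omega⟩
      simp only [proj0, show ¬ i - 1 < k - 1 by omega, dite_false] at h
      simpa [Nat.sub_add_cancel (show 1 ≤ i by omega)] using h

theorem ker_proj1ₗ_inf_ker_proj0ₗ {k : ℕ} (hk : 0 < k) :
    LinearMap.ker (proj1ₗ k) ⊓ LinearMap.ker (proj0ₗ k) = ⊥ := by
  refine (Submodule.eq_bot_iff _).2 fun w ⟨h1, h0⟩ => ?_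
  refine eq_of_proj0_eq_of_proj1_eq (w' := 0) hk ?_ ?_
  · exact h0.trans (map_zero (proj0ₗ k)).symm
  · exact h1.trans (map_zero (proj1ₗ k)).symm

theorem qForm_succ (m : ℕ) (w : Fin (2 * (m + 1)) → ZMod 2) :
    qForm (m + 1) w = qForm m (proj0 (m + 1) w) + (proj1 (m + 1) w).1 * (proj1 (m + 1) w).2 := by
  simp only [qForm, proj1, dif_pos m.succ_pos, Fin.sum_univ_castSucc]
  congr 1
  · refine Finset.sum_congr rfl fun i _ => ?_
    have hi := i.2
    simp only [proj0, Fin.val_castSucc, Nat.add_sub_cancel, dif_pos hi,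
      dif_neg (show ¬ m + (i : ℕ) < m by omega)]
    congr 2
    simp only [Fin.mk.injEq]
    omega
  · congr 2
    simp only [Fin.mk.injEq, Fin.val_last]
    omega

theorem Rset_succ (m : ℕ) :
    Rset (m + 1) = {w | proj0 (m + 1) w ∈ if proj1 (m + 1) w = (1, 1) then Sset m else Rset m} := by
  ext w
  rw [Set.mem_ofPred_eq]
  change qForm (m + 1) w = 0 ↔ _
  rw [qForm_succ]
  generalize proj1 (m + 1) w = σ
  split_ifs with h
  · subst h
    change _ ↔ qForm m _ = 1
    generalize qForm m _ = q
    revert q; decide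
  · obtain ⟨a, b⟩ := σ
    have hab : a * b = 0 := by revert a b; decide
    simp [Rset, hab]

theorem Sset_succ (m : ℕ) :
    Sset (m + 1) = {w | proj0 (m + 1) w ∈ if proj1 (m + 1) w = (1, 1) then Rset m else Sset m} := by
  ext w
  rw [Set.mem_ofPred_eq]
  change qForm (m + 1) w = 1 ↔ _
  rw [qForm_succ]
  generalize proj1 (m + 1) w = σ
  split_ifs with h
  · subst h
    change _ ↔ qForm m _ = 0
    generalize qForm m _ = q
    revert q; decide
  · obtain ⟨a, b⟩ := σ
    have hab : a * b = 0 := by revert a b; decide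
    simp [Sset, hab]

def fiber (k : ℕ) (A : Set (Fin (2 * k) → ZMod 2)) (σ : ZMod 2 × ZMod 2) :
    Set (Fin (2 * (k - 1)) → ZMod 2) :=
  proj0 k '' (A ∩ proj1 k ⁻¹' {σ})

theorem inter_eq_biUnion_tensorSuffix {k : ℕ} (hk : 0 < k) (A : Set (Fin (2 * k) → ZMod 2))
    (X : ZMod 2 × ZMod 2 → Set (Fin (2 * (k - 1)) → ZMod 2)) :
    A ∩ {w | proj0 k w ∈ X (proj1 k w)} =
      ⋃ σ ∈ proj1 k '' A, tensorSuffix k (fiber k A σ ∩ X σ) σ := by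
  ext w
  simp only [Set.mem_inter_iff, Set.mem_iUnion, exists_prop, tensorSuffix]
  constructor
  · rintro ⟨hwA, hX⟩
    exact ⟨_, ⟨w, hwA, rfl⟩, ⟨⟨w, ⟨hwA, rfl⟩, rfl⟩, hX⟩, rfl⟩
  · rintro ⟨σ, -, ⟨⟨w', ⟨hw'A, hw'σ⟩, hw'w⟩, hX⟩, rfl⟩
    obtain rfl := eq_of_proj0_eq_of_proj1_eq hk hw'w hw'σ
    exact ⟨hw'A, hX⟩

theorem pairwiseDisjoint_tensorSuffix (k : ℕ) (F : Set (ZMod 2 × ZMod 2))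
    (X : ZMod 2 × ZMod 2 → Set (Fin (2 * (k - 1)) → ZMod 2)) :
    F.PairwiseDisjoint fun σ => tensorSuffix k (X σ) σ :=
  fun _ _ _ _ hne => Set.disjoint_left.2 fun _ h h' => hne (h.2.symm.trans h'.2)

theorem fiber_translate_submodule (k : ℕ) {a w₀ : Fin (2 * k) → ZMod 2}
    {W : Submodule (ZMod 2) (Fin (2 * k) → ZMod 2)} (hw₀ : w₀ ∈ (a + ·) '' (W : Set _)) :
    fiber k ((a + ·) '' (W : Set _)) (proj1 k w₀) =
      (proj0 k w₀ + ·) '' ((W ⊓ LinearMap.ker (proj1ₗ k)).map (proj0ₗ k) : Set _) := by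
  rw [fiber, ← coe_proj0ₗ, ← coe_proj1ₗ, translate_submodule_inter_preimage_singleton _ hw₀]
  exact (proj0ₗ k).image_translate_submodule w₀ _

theorem stmt_4_general (k d : ℕ) (hk : 1 < k)
    (A : Set (Fin (2 * k) → ZMod 2))
    (hA : ∃ (a : Fin (2 * k) → ZMod 2)
        (W : Submodule (ZMod 2) (Fin (2 * k) → ZMod 2)),
        Module.finrank (ZMod 2) W = d ∧ A = (a + ·) '' (W : Set _)) :
    ∃ (σ₀ : ZMod 2 × ZMod 2) (WF : Submodule (ZMod 2) (ZMod 2 × ZMod 2))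
      (W' : Submodule (ZMod 2) (Fin (2 * (k - 1)) → ZMod 2))
      (A' : ZMod 2 × ZMod 2 → Set (Fin (2 * (k - 1)) → ZMod 2)),
      -- `F := π₁(A)` is an affine subspace of `𝔽₂²`
      proj1 k '' A = (σ₀ + ·) '' (WF : Set (ZMod 2 × ZMod 2)) ∧
      -- `dim W' = d - dim F`
      Module.finrank (ZMod 2) W' + Module.finrank (ZMod 2) WF = d ∧
      -- each `A'_σ ⊆ π₀(A)` is a translate of the same linear subspace `W'`
      (∀ σ ∈ proj1 k '' A,
        A' σ ⊆ proj0 k '' A ∧ ∃ u, A' σ = (u + ·) '' (W' : Set _)) ∧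
      -- structure formula for `A ∩ R_k`
      A ∩ Rset k = ⋃ σ ∈ proj1 k '' A,
        tensorSuffix k
          (A' σ ∩ (if σ = ((1 : ZMod 2), (1 : ZMod 2)) then Sset (k - 1) else Rset (k - 1))) σ ∧
      -- structure formula for `A ∩ S_k`
      A ∩ Sset k = ⋃ σ ∈ proj1 k '' A,
        tensorSuffix k
          (A' σ ∩ (if σ = ((1 : ZMod 2), (1 : ZMod 2)) then Rset (k - 1) else Sset (k - 1))) σ ∧
      -- the unions are disjoint
      (proj1 k '' A).PairwiseDisjoint (fun σ =>
        tensorSuffix k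
          (A' σ ∩ (if σ = ((1 : ZMod 2), (1 : ZMod 2)) then Sset (k - 1) else Rset (k - 1))) σ) ∧
      (proj1 k '' A).PairwiseDisjoint (fun σ =>
        tensorSuffix k
          (A' σ ∩ (if σ = ((1 : ZMod 2), (1 : ZMod 2)) then Rset (k - 1) else Sset (k - 1))) σ)  := by
  obtain ⟨a, W, rfl, rfl⟩ := hA
  obtain ⟨m, rfl⟩ : ∃ m, k = m + 1 := ⟨k - 1, by omega⟩
  refine ⟨proj1 (m + 1) a, W.map (proj1ₗ (m + 1)),
    (W ⊓ LinearMap.ker (proj1ₗ (m + 1))).map (proj0ₗ (m + 1)), fiber (m + 1) ((a + ·) '' W),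
    (proj1ₗ (m + 1)).image_translate_submodule a W,
    finrank_map_inf_ker_add_finrank_map (ker_proj1ₗ_inf_ker_proj0ₗ m.succ_pos) W, ?_, ?_, ?_,
    pairwiseDisjoint_tensorSuffix _ _ _, pairwiseDisjoint_tensorSuffix _ _ _⟩
  · rintro _ ⟨w₀, hw₀, rfl⟩
    exact ⟨Set.image_mono Set.inter_subset_left, _, fiber_translate_submodule _ hw₀⟩
  · rw [Rset_succ]
    exact inter_eq_biUnion_tensorSuffix m.succ_pos _ fun σ => if σ = (1, 1) then Sset m else Rset m
  · rw [Sset_succ]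
    exact inter_eq_biUnion_tensorSuffix m.succ_pos _ fun σ => if σ = (1, 1) then Rset m else Sset m

theorem stmt_4 (k d : ℕ) (hk : 1 < k) (hd : k ≤ d)
    (A : Set (Fin (2 * k) → ZMod 2))
    (hA : ∃ (a : Fin (2 * k) → ZMod 2)
        (W : Submodule (ZMod 2) (Fin (2 * k) → ZMod 2)),
        Module.finrank (ZMod 2) W = d ∧ A = (a + ·) '' (W : Set _)) :
    ∃ (σ₀ : ZMod 2 × ZMod 2) (WF : Submodule (ZMod 2) (ZMod 2 × ZMod 2))
      (W' : Submodule (ZMod 2) (Fin (2 * (k - 1)) → ZMod 2))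
      (A' : ZMod 2 × ZMod 2 → Set (Fin (2 * (k - 1)) → ZMod 2)),
      -- `F := π₁(A)` is an affine subspace of `𝔽₂²`
      proj1 k '' A = (σ₀ + ·) '' (WF : Set (ZMod 2 × ZMod 2)) ∧
      -- `dim W' = d - dim F`
      Module.finrank (ZMod 2) W' + Module.finrank (ZMod 2) WF = d ∧
      -- each `A'_σ ⊆ π₀(A)` is a translate of the same linear subspace `W'`
      (∀ σ ∈ proj1 k '' A,
        A' σ ⊆ proj0 k '' A ∧ ∃ u, A' σ = (u + ·) '' (W' : Set _)) ∧
      -- structure formula for `A ∩ R_k`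
      A ∩ Rset k = ⋃ σ ∈ proj1 k '' A,
        tensorSuffix k
          (A' σ ∩ (if σ = ((1 : ZMod 2), (1 : ZMod 2)) then Sset (k - 1) else Rset (k - 1))) σ ∧
      -- structure formula for `A ∩ S_k`
      A ∩ Sset k = ⋃ σ ∈ proj1 k '' A,
        tensorSuffix k
          (A' σ ∩ (if σ = ((1 : ZMod 2), (1 : ZMod 2)) then Rset (k - 1) else Sset (k - 1))) σ ∧
      -- the unions are disjoint
      (proj1 k '' A).PairwiseDisjoint (fun σ =>
        tensorSuffix k
          (A' σ ∩ (if σ = ((1 : ZMod 2), (1 : ZMod 2)) then Sset (k - 1) else Rset (k - 1))) σ) ∧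
      (proj1 k '' A).PairwiseDisjoint (fun σ =>
        tensorSuffix k
          (A' σ ∩ (if σ = ((1 : ZMod 2), (1 : ZMod 2)) then Rset (k - 1) else Sset (k - 1))) σ) :=
  stmt_4_general k d hk A hA
end

section
/- Let e and k > 1 be positive integers. Suppose that |B ∩ S_{k-1}| ≤ 2^{dim B - 1} + 2^{k-3} for every affine subspace B of 𝔽₂^{2k-2} with dim B ∈ {e-1, e}. Then |A₁ ∩ R_{k-1}| + |A₂ ∩ S_{k-1}| ≤ 2^e + 2^{k-2} for every pair of e-dimensional affine subspaces A₁ = a₁ + W and A₂ = a₂ + W of 𝔽₂^{2k-2} that arise as translations of the same linear subspace W of 𝔽₂^{2k-2}. -/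
/-! Put `d = a₂ - a₁`, so that `A₂ = d + A₁`. For a quadratic form, `q (d + x) = q x + ℓ x` with
`ℓ` affine. A point `x ∈ A₁` with `ℓ x = 0` is counted exactly once in `|A₁ ∩ R| + |A₂ ∩ S|`
(through `x` or through `d + x`), while a point with `ℓ x = 1` is counted twice or not at all,
according as `q (d + x) = 1` or not. Hence the sum equals
`|A₁ ∩ {ℓ = 0}| + 2 |(d + (A₁ ∩ {ℓ = 1})) ∩ S|`. If `ℓ` is constant on `A₁` this is at most
`|A₁| = 2^e` or equal to `2 |A₂ ∩ S|`; otherwise both level sets of `ℓ` on `A₁` are affine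
subspaces of dimension `e - 1`, and the hypothesis in dimension `e - 1` applies. -/

theorem ZMod.eq_zero_or_eq_one (c : ZMod 2) : c = 0 ∨ c = 1 := by
  revert c; decide

theorem two_mul_two_zpow_sub_one (m : ℤ) : (2 : ℝ) * 2 ^ (m - 1) = 2 ^ m := by
  rw [zpow_sub_one₀ two_ne_zero]
  ring

open Finset in
theorem card_filter_eq_zero_add_card_filter_add_eq_one {α : Type*} (s : Finset α)
    (q ℓ : α → ZMod 2) :
    #{x ∈ s | q x = 0} + #{x ∈ s | q x + ℓ x = 1}
      = #{x ∈ s | ℓ x = 0} + 2 * #{x ∈ s | ℓ x = 1 ∧ q x + ℓ x = 1} := by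
  simp only [card_filter, mul_sum, ← sum_add_distrib]
  refine sum_congr rfl fun x _ => ?_
  generalize q x = a, ℓ x = b
  revert a b
  decide

theorem Set.Finite.ncard_inter_eq_zero_add_ncard_inter_add_eq_one {α : Type*} {A : Set α}
    (hA : A.Finite) (q ℓ : α → ZMod 2) :
    (A ∩ {x | q x = 0}).ncard + (A ∩ {x | q x + ℓ x = 1}).ncard
      = (A ∩ {x | ℓ x = 0}).ncard + 2 * (A ∩ {x | ℓ x = 1} ∩ {x | q x + ℓ x = 1}).ncard := by
  classical
  obtain ⟨s, rfl⟩ := hA.exists_finset_coe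
  have hcard := card_filter_eq_zero_add_card_filter_add_eq_one s q ℓ
  simp only [← Set.ncard_coe_finset, Finset.coe_filter] at hcard
  convert hcard using 4 <;> ext <;> simp [and_assoc]

theorem AffineMap.map_add_eq_add_linear {k V₁ V₂ : Type*} [Ring k] [AddCommGroup V₁]
    [Module k V₁] [AddCommGroup V₂] [Module k V₂] (f : V₁ →ᵃ[k] V₂) (x u : V₁) :
    f (x + u) = f x + f.linear u := by
  rw [add_comm x, ← vadd_eq_add, f.map_vadd, vadd_eq_add, add_comm]

theorem Submodule.finrank_inf_ker_add_one {K V : Type*} [Field K] [AddCommGroup V] [Module K V]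
    {W : Submodule K V} [FiniteDimensional K W] {L : Module.Dual K V} (h : ∃ w ∈ W, L w ≠ 0) :
    Module.finrank K (W ⊓ LinearMap.ker L : Submodule K V) + 1 = Module.finrank K W := by
  obtain ⟨w, hw, hLw⟩ := h
  have hne : L ∘ₗ W.subtype ≠ 0 := fun h0 => hLw (by simpa using LinearMap.congr_fun h0 ⟨w, hw⟩)
  rw [← Submodule.map_comap_subtype, Submodule.finrank_map_subtype_eq, ← LinearMap.ker_comp]
  exact Module.Dual.finrank_ker_add_one_of_ne_zero hne

def QuadraticMap.differenceMap {R M : Type*} [CommRing R] [AddCommGroup M] [Module R M]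
    (Q : QuadraticMap R M R) (d : M) : M →ᵃ[R] R :=
  (polarBilin Q d).toAffineMap + AffineMap.const R M (Q d)

theorem QuadraticMap.map_add_left_eq {R M : Type*} [CommRing R] [AddCommGroup M] [Module R M]
    (Q : QuadraticMap R M R) (d x : M) : Q (d + x) = Q x + Q.differenceMap d x := by
  simp only [differenceMap, AffineMap.coe_add, LinearMap.coe_toAffineMap, AffineMap.coe_const,
    Pi.add_apply, polarBilin_apply_apply, polar, Function.const_apply]
  ring

section AffineSubspace

variable {V : Type*} [AddCommGroup V] [Module (ZMod 2) V]

theorem IsAffineOfDim.ncard [Finite V] {A : Set V} {d : ℕ} (hA : IsAffineOfDim A d) :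
    A.ncard = 2 ^ d := by
  obtain ⟨a, W, rfl, rfl⟩ := hA
  rw [Set.ncard_image_of_injective _ (add_right_injective a), ← Nat.card_coe_set_eq,
    SetLike.coe_sort_coe, Module.natCard_eq_pow_finrank (K := ZMod 2), Nat.card_zmod]

theorem IsAffineOfDim.image_add {A : Set V} {d : ℕ} (hA : IsAffineOfDim A d) (v : V) :
    IsAffineOfDim ((v + ·) '' A) d := by
  obtain ⟨a, W, hW, rfl⟩ := hA
  exact ⟨v + a, W, hW, by rw [Set.image_image]; simp only [add_assoc]⟩

theorem isAffineOfDim_inter_setOf_eq {W : Submodule (ZMod 2) V} [FiniteDimensional (ZMod 2) W]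
    {ℓ : V →ᵃ[ZMod 2] ZMod 2} (h : ∃ w ∈ W, ℓ.linear w ≠ 0) (a : V) (c : ZMod 2) :
    IsAffineOfDim ((a + ·) '' (W : Set V) ∩ {x | ℓ x = c}) (Module.finrank (ZMod 2) W - 1) := by
  obtain ⟨w, hw, hℓw⟩ := h
  set t := (c - ℓ a) / ℓ.linear w
  have hbase : ℓ (a + t • w) = c := by
    rw [ℓ.map_add_eq_add_linear, map_smul, smul_eq_mul, div_mul_cancel₀ _ hℓw, add_sub_cancel]
  refine ⟨a + t • w, W ⊓ LinearMap.ker ℓ.linear, ?_, ?_⟩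
  · rw [← Submodule.finrank_inf_ker_add_one ⟨w, hw, hℓw⟩, Nat.add_sub_cancel]
  ext x
  simp only [Set.mem_inter_iff, Set.mem_image, SetLike.mem_coe, Set.mem_ofPred_eq,
    Submodule.mem_inf, LinearMap.mem_ker]
  constructor
  · rintro ⟨⟨u, hu, rfl⟩, hx⟩
    refine ⟨u - t • w, ⟨W.sub_mem hu (W.smul_mem t hw), ?_⟩, by abel⟩
    rw [map_sub, map_smul, smul_eq_mul, div_mul_cancel₀ _ hℓw, ← hx, ℓ.map_add_eq_add_linear]
    ring
  · rintro ⟨u, ⟨hu, hℓu⟩, rfl⟩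
    refine ⟨⟨t • w + u, W.add_mem (W.smul_mem t hw) hu, by abel⟩, ?_⟩
    rw [ℓ.map_add_eq_add_linear, hℓu, add_zero, hbase]

theorem QuadraticMap.ncard_zeros_add_ncard_image_add_ones {Q : QuadraticForm (ZMod 2) V}
    {A : Set V} (hA : A.Finite) (d : V) :
    (A ∩ {x | Q x = 0}).ncard + ((d + ·) '' A ∩ {x | Q x = 1}).ncard
      = (A ∩ {x | Q.differenceMap d x = 0}).ncard
        + 2 * ((d + ·) '' (A ∩ {x | Q.differenceMap d x = 1}) ∩ {x | Q x = 1}).ncard := by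
  have htranslate : ∀ P : Set V, ((d + ·) '' P ∩ {x | Q x = 1}).ncard
      = (P ∩ {x | Q x + Q.differenceMap d x = 1}).ncard := fun P => by
    rw [← Set.image_inter_preimage, Set.ncard_image_of_injective _ (add_right_injective d)]
    simp only [Set.preimage_ofPred_eq, Q.map_add_left_eq]
  rw [htranslate, htranslate]
  exact hA.ncard_inter_eq_zero_add_ncard_inter_add_eq_one Q (Q.differenceMap d)

theorem QuadraticMap.ncard_zeros_add_ncard_ones_le [Finite V] (Q : QuadraticForm (ZMod 2) V)
    (W : Submodule (ZMod 2) V) {M : ℝ} (hM : 0 ≤ M)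
    (hB : ∀ (B : Set V) (dB : ℕ), IsAffineOfDim B dB →
      (dB = Module.finrank (ZMod 2) W - 1 ∨ dB = Module.finrank (ZMod 2) W) →
      2 * ((B ∩ {x | Q x = 1}).ncard : ℝ) ≤ 2 ^ dB + M)
    (a₁ a₂ : V) :
    (((a₁ + ·) '' (W : Set V) ∩ {x | Q x = 0}).ncard : ℝ)
        + (((a₂ + ·) '' (W : Set V) ∩ {x | Q x = 1}).ncard : ℝ)
      ≤ 2 ^ Module.finrank (ZMod 2) W + M := by
  set d := a₂ - a₁
  set A := (a₁ + ·) '' (W : Set V)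
  have hA : IsAffineOfDim A (Module.finrank (ZMod 2) W) := ⟨a₁, W, rfl, rfl⟩
  have hA₂ : (a₂ + ·) '' (W : Set V) = (d + ·) '' A := by
    rw [Set.image_image]; simp only [d, ← add_assoc, sub_add_cancel]
  rw [hA₂, ← Nat.cast_add, Q.ncard_zeros_add_ncard_image_add_ones (Set.toFinite A) d]
  push_cast
  set ℓ := Q.differenceMap d
  by_cases hL : ∀ w ∈ W, ℓ.linear w = 0
  · have hconst : ∀ x ∈ A, ℓ x = ℓ a₁ := by
      rintro _ ⟨w, hw, rfl⟩
      rw [ℓ.map_add_eq_add_linear, hL w hw, add_zero]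
    have hlevel : ∀ c, A ∩ {x | ℓ x = c} = if ℓ a₁ = c then A else ∅ := fun c => by
      split_ifs with hc
      · exact Set.inter_eq_left.mpr fun x hx => (hconst x hx).trans hc
      · exact Set.eq_empty_of_forall_notMem fun x hx => hc ((hconst x hx.1).symm.trans hx.2)
    rcases ZMod.eq_zero_or_eq_one (ℓ a₁) with h | h
    · simp only [hlevel, h, if_true, zero_ne_one, if_false, Set.image_empty, Set.empty_inter,
        Set.ncard_empty, Nat.cast_zero, mul_zero, add_zero, hA.ncard, Nat.cast_pow,
        Nat.cast_ofNat]
      linarith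
    · simp only [hlevel, h, if_true, one_ne_zero, if_false, Set.ncard_empty, Nat.cast_zero,
        zero_add]
      exact hB _ _ (hA.image_add d) (Or.inr rfl)
  · obtain ⟨w, hw, hℓw⟩ : ∃ w ∈ W, ℓ.linear w ≠ 0 := by simpa using hL
    obtain ⟨e, he⟩ : ∃ e, Module.finrank (ZMod 2) W = e + 1 :=
      ⟨_, (Submodule.finrank_inf_ker_add_one ⟨w, hw, hℓw⟩).symm⟩
    have h₀ := isAffineOfDim_inter_setOf_eq ⟨w, hw, hℓw⟩ a₁ 0
    have h₁ := (isAffineOfDim_inter_setOf_eq ⟨w, hw, hℓw⟩ a₁ 1).image_add d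
    rw [he, Nat.add_sub_cancel] at h₀ h₁
    have hbound := hB _ _ h₁ (Or.inl (by rw [he, Nat.add_sub_cancel]))
    rw [h₀.ncard, he, pow_succ]
    push_cast
    linarith

end AffineSubspace

def qFormQuadratic (n : ℕ) : QuadraticForm (ZMod 2) (Fin (2 * n) → ZMod 2) :=
  ∑ i : Fin n,
    QuadraticMap.linMulLin (LinearMap.proj ⟨i, by omega⟩) (LinearMap.proj ⟨n + i, by omega⟩)

theorem coe_qFormQuadratic (n : ℕ) : ⇑(qFormQuadratic n) = qForm n := by
  ext x
  simp [qFormQuadratic, qForm]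

theorem stmt_6_general (e k : ℕ)
    (hhyp : ∀ (B : Set (Fin (2 * (k - 1)) → ZMod 2)) (dB : ℕ),
      IsAffineOfDim B dB → (dB = e - 1 ∨ dB = e) →
      ((B ∩ Sset (k - 1)).ncard : ℝ) ≤ 2 ^ ((dB : ℤ) - 1) + 2 ^ ((k : ℤ) - 3))
    (a₁ a₂ : Fin (2 * (k - 1)) → ZMod 2)
    (W : Submodule (ZMod 2) (Fin (2 * (k - 1)) → ZMod 2))
    (hW : Module.finrank (ZMod 2) W = e) :
    (((a₁ + ·) '' (W : Set _) ∩ Rset (k - 1)).ncard : ℝ)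
        + (((a₂ + ·) '' (W : Set _) ∩ Sset (k - 1)).ncard : ℝ)
      ≤ 2 ^ (e : ℤ) + 2 ^ ((k : ℤ) - 2) := by
  subst hW
  have hS : Sset (k - 1) = {x | qFormQuadratic (k - 1) x = 1} := by simp [Sset, coe_qFormQuadratic]
  have hR : Rset (k - 1) = {x | qFormQuadratic (k - 1) x = 0} := by simp [Rset, coe_qFormQuadratic]
  rw [hS, hR, zpow_natCast]
  refine (qFormQuadratic (k - 1)).ncard_zeros_add_ncard_ones_le W (by positivity) ?_ a₁ a₂
  intro B dB hB hdB
  calc 2 * ((B ∩ {x | qFormQuadratic (k - 1) x = 1}).ncard : ℝ)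
      ≤ 2 * (2 ^ ((dB : ℤ) - 1) + 2 ^ ((k : ℤ) - 3)) := by
        rw [← hS]
        exact mul_le_mul_of_nonneg_left (hhyp B dB hB hdB) zero_le_two
    _ = 2 ^ dB + 2 ^ ((k : ℤ) - 2) := by
        rw [mul_add, show (k : ℤ) - 3 = (k : ℤ) - 2 - 1 by ring, two_mul_two_zpow_sub_one,
          two_mul_two_zpow_sub_one, zpow_natCast]

theorem stmt_6 (e k : ℕ) (he : 0 < e) (hk : 1 < k)
    (hhyp : ∀ (B : Set (Fin (2 * (k - 1)) → ZMod 2)) (dB : ℕ),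
      IsAffineOfDim B dB → (dB = e - 1 ∨ dB = e) →
      ((B ∩ Sset (k - 1)).ncard : ℝ) ≤ 2 ^ ((dB : ℤ) - 1) + 2 ^ ((k : ℤ) - 3))
    (a₁ a₂ : Fin (2 * (k - 1)) → ZMod 2)
    (W : Submodule (ZMod 2) (Fin (2 * (k - 1)) → ZMod 2))
    (hW : Module.finrank (ZMod 2) W = e) :
    (((a₁ + ·) '' (W : Set _) ∩ Rset (k - 1)).ncard : ℝ)
        + (((a₂ + ·) '' (W : Set _) ∩ Sset (k - 1)).ncard : ℝ)
      ≤ 2 ^ (e : ℤ) + 2 ^ ((k : ℤ) - 2) :=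
  stmt_6_general e k hhyp a₁ a₂ W hW
end

section
/- Let k be a positive integer, a, b, c ∈ 𝔽₂^{2k}, and W a linear subspace of 𝔽₂^{2k} such that the four affine subspaces A₀₀ = a + W, A₀₁ = a + b + W, A₁₀ = a + c + W, A₁₁ = a + b + c + W are pairwise disjoint. Then there exist two disjoint sets B₁ and B₂, each of which is either empty or an affine subspace of 𝔽₂^{2k}, such that |A₀₀ ∩ S_k| + |A₀₁ ∩ S_k| + |A₁₀ ∩ S_k| + |A₁₁ ∩ R_k| = |B₁| + 2·|B₂ ∩ S_k| and |B₁| + |B₂| = 2·|W|. -/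
/-- `A` is an affine subspace: a translate `a + W` of a linear subspace `W`. -/
def IsAffineSubspace {V : Type*} [AddCommGroup V] [Module (ZMod 2) V]
    (A : Set V) : Prop :=
  ∃ (a : V) (W : Submodule (ZMod 2) V), A = (a + ·) '' (W : Set V)

/-!
The argument works for any quadratic form `Q` on a finite `𝔽₂`-vector space.
For `x = a + w` with `w ∈ W`, put `α = Q (x + b) - Q x`, `β = Q (x + c) - Q x` and
`ε = polar Q b c`. Then `Q (x + b + c) = Q x + α + β + ε`, so the contribution of the block
`x, x + b, x + c, x + b + c` to the left-hand side depends only on `Q x`, `α`, `β`, and `α`, `β`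
are affine functions of `w`.

If `ε = 0` the contribution is `1 + 2 [Q (x + α c) = 1]`; the shear `x ↦ x + α c` maps `a + W`
bijectively onto an affine subspace `B₂`, and `B₁` is a translate of `B₂` disjoint from it.

If `ε = 1` the contribution is `2`, except where `α = β = 0`, where it is `4 Q x`. If that never
happens, `B₁ = a + W + ⟨b⟩` and `B₂ = ∅`. Otherwise, after moving `a` inside `a + W`, the
exceptional points form `a + U` with `U = W ∩ b^⊥ ∩ c^⊥`, of index `1`, `2` or `4` in `W`, and on
`a + U` we have `Q (x + b) = Q (x + c) = Q x ≠ Q (x + b + c)`. Then `B₂ = a + U + ⟨b⟩` works for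
index `1`, and `B₂ = a + U + ⟨b, c⟩` for index `2` and `4`, in the last case together with a
translate `B₁` of `B₂` by a vector of `W \ U`.
-/

open QuadraticMap Submodule

theorem zmod2_eq_zero_or_one (z : ZMod 2) : z = 0 ∨ z = 1 := by
  revert z
  decide

theorem QuadraticMap.apply_add_add {R M N : Type*} [CommRing R] [AddCommGroup M]
    [AddCommGroup N] [Module R M] [Module R N] (Q : QuadraticMap R M N) (x u v : M) :
    Q (x + u + v) = Q (x + u) + Q (x + v) - Q x + polar Q u v := by
  have h := polar_add_left Q x u v
  simp only [polar] at h ⊢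
  rw [← sub_eq_zero] at h ⊢
  rw [← h]
  abel

theorem QuadraticMap.apply_add_add_of_apply_add_eq {R M N : Type*} [CommRing R]
    [AddCommGroup M] [AddCommGroup N] [Module R M] [Module R N] (Q : QuadraticMap R M N)
    {a d : M} (hd : Q (a + d) = Q a) (x : M) : Q (a + x + d) = Q (a + x) + polar Q d x := by
  rw [apply_add_add, hd, polar_comm]
  abel

section Counting

variable {α β : Type*} [Fintype α]

open Classical in
theorem Set.ncard_eq_sum_ite (s : Set α) : s.ncard = ∑ x, if x ∈ s then 1 else 0 := by
  rw [Finset.sum_boole, Set.ncard_eq_toFinset_card', Set.filter_mem_univ_eq_toFinset,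
    Nat.cast_id]

open Classical in
theorem Set.ncard_image_inter_eq_sum {g : α → β} {s : Set α} (hg : s.InjOn g)
    (F : β → ZMod 2) :
    (g '' s ∩ {y | F y = 1}).ncard = ∑ x, if x ∈ s then (F (g x)).val else 0 := by
  have himage : g '' s ∩ {y | F y = 1} = g '' {x | x ∈ s ∧ F (g x) = 1} := by
    ext y
    simp only [Set.mem_inter_iff, Set.mem_image, Set.mem_ofPred_eq]
    constructor
    · rintro ⟨⟨x, hx, rfl⟩, hF⟩
      exact ⟨x, ⟨hx, hF⟩, rfl⟩
    · rintro ⟨x, ⟨hx, hF⟩, rfl⟩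
      exact ⟨⟨x, hx, rfl⟩, hF⟩
  have hval : ∀ z : ZMod 2, z.val = if z = 1 then 1 else 0 := by decide
  rw [himage, (hg.mono fun x hx => hx.1).ncard_image, Set.ncard_eq_sum_ite]
  refine Finset.sum_congr rfl fun x _ => ?_
  by_cases hx : x ∈ s <;> simp [hx, hval]

end Counting

section Cosets

variable {V : Type*} [AddCommGroup V]

theorem disjoint_image_add_iff {R : Type*} [Ring R] [Module R V] {M : Submodule R V}
    {d : V} (p : V) :
    Disjoint ((p + ·) '' (M : Set V)) ((p + d + ·) '' (M : Set V)) ↔ d ∉ M := by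
  refine ⟨fun h hd => Set.disjoint_left.mp h ⟨d, hd, rfl⟩ ⟨0, M.zero_mem, add_zero _⟩,
    fun hd => ?_⟩
  rw [Set.disjoint_left]
  rintro _ ⟨m, hm, rfl⟩ ⟨m', hm', h⟩
  change p + d + m' = p + m at h
  rw [add_assoc] at h
  exact hd (eq_sub_of_add_eq (add_left_cancel h) ▸ sub_mem hm hm')

theorem image_add_add_of_mem {R : Type*} [Ring R] [Module R V] {M : Submodule R V}
    {w : V} (hw : w ∈ M) (p : V) : (p + w + ·) '' (M : Set V) = (p + ·) '' M := by
  ext y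
  constructor
  · rintro ⟨m, hm, rfl⟩
    exact ⟨w + m, add_mem hw hm, (add_assoc p w m).symm⟩
  · rintro ⟨m, hm, rfl⟩
    exact ⟨m - w, sub_mem hm hw, by simp only [add_assoc, add_sub_cancel]⟩

variable [Module (ZMod 2) V]

theorem coe_sup_span_singleton (M : Submodule (ZMod 2) V) (d : V) :
    ((M ⊔ span (ZMod 2) {d} : Submodule (ZMod 2) V) : Set V) = (M : Set V) ∪ (d + ·) '' M := by
  ext x
  simp only [SetLike.mem_coe, Submodule.mem_sup, mem_span_singleton, Set.mem_union,
    Set.mem_image]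
  constructor
  · rintro ⟨m, hm, _, ⟨t, rfl⟩, rfl⟩
    obtain rfl | rfl := zmod2_eq_zero_or_one t
    · simpa using Or.inl hm
    · exact Or.inr ⟨m, hm, by simp [add_comm]⟩
  · rintro (hx | ⟨m, hm, rfl⟩)
    · exact ⟨x, hx, 0, ⟨0, zero_smul _ _⟩, add_zero x⟩
    · exact ⟨m, hm, d, ⟨1, one_smul _ _⟩, add_comm m d⟩

theorem notMem_sup_span_singleton {W : Submodule (ZMod 2) V} {b c : V} (hc : c ∉ W)
    (hbc : b + c ∉ W) : c ∉ W ⊔ span (ZMod 2) {b} := by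
  rw [← SetLike.mem_coe, coe_sup_span_singleton]
  rintro (hcW | ⟨w, hw, rfl⟩)
  · exact hc hcW
  · refine hbc ?_
    change b + (b + w) ∈ W
    rwa [← add_assoc, ZModModule.add_self, zero_add]

theorem span_pair_inf_eq_bot {W : Submodule (ZMod 2) V} {b c : V} (hb : b ∉ W) (hc : c ∉ W)
    (hbc : b + c ∉ W) : span (ZMod 2) {b, c} ⊓ W = ⊥ := by
  refine eq_bot_iff.mpr fun x hx => ?_
  obtain ⟨hxspan, hxW⟩ := mem_inf.mp hx
  obtain ⟨s, t, rfl⟩ := mem_span_pair.mp hxspan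
  obtain rfl | rfl := zmod2_eq_zero_or_one s <;> obtain rfl | rfl := zmod2_eq_zero_or_one t <;>
    simp_all

theorem exists_mem_notMem_sup_span_sup_span {U W : Submodule (ZMod 2) V} {b c : V} (hUW : U < W)
    (hb : b ∉ W) (hc : c ∉ W) (hbc : b + c ∉ W) :
    ∃ v ∈ W, v ∉ U ⊔ span (ZMod 2) {b} ⊔ span (ZMod 2) {c} := by
  obtain ⟨v, hvW, hvU⟩ := SetLike.exists_of_lt hUW
  refine ⟨v, hvW, fun hv => hvU ?_⟩
  have hinf : (U ⊔ span (ZMod 2) {b} ⊔ span (ZMod 2) {c}) ⊓ W = U := by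
    rw [sup_assoc, ← span_insert, sup_inf_assoc_of_le _ hUW.le, span_pair_inf_eq_bot hb hc hbc,
      sup_bot_eq]
  exact hinf ▸ mem_inf.mpr ⟨hv, hvW⟩

variable [Finite V]

theorem ncard_image_add_sup_span_inter {M : Submodule (ZMod 2) V} {d : V} (hd : d ∉ M)
    (p : V) (T : Set V) :
    ((p + ·) '' ↑(M ⊔ span (ZMod 2) {d}) ∩ T).ncard
      = ((p + ·) '' ↑M ∩ T).ncard + ((p + d + ·) '' ↑M ∩ T).ncard := by
  rw [coe_sup_span_singleton, Set.image_union, Set.image_image, Set.union_inter_distrib_right]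
  simp_rw [← add_assoc]
  exact Set.ncard_union_eq
    (((disjoint_image_add_iff p).mpr hd).mono Set.inter_subset_left Set.inter_subset_left)

theorem ncard_sup_span_singleton {M : Submodule (ZMod 2) V} {d : V} (hd : d ∉ M) :
    (↑(M ⊔ span (ZMod 2) {d}) : Set V).ncard = 2 * (M : Set V).ncard := by
  rw [coe_sup_span_singleton,
    Set.ncard_union_eq (by simpa using (disjoint_image_add_iff 0).mpr hd),
    Set.ncard_image_of_injective _ (add_right_injective d), two_mul]

theorem ncard_eq_or_eq_two_mul_ncard_inf_ker (W : Submodule (ZMod 2) V)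
    (φ : V →ₗ[ZMod 2] ZMod 2) :
    (W : Set V).ncard = (↑(W ⊓ LinearMap.ker φ) : Set V).ncard ∨
      (W : Set V).ncard = 2 * (↑(W ⊓ LinearMap.ker φ) : Set V).ncard := by
  by_cases hW : W ≤ LinearMap.ker φ
  · left
    rw [inf_eq_left.mpr hW]
  · right
    obtain ⟨v, hvW, hv⟩ := SetLike.not_le_iff_exists.mp hW
    have hv1 : φ v = 1 := by
      rw [LinearMap.mem_ker] at hv
      exact (zmod2_eq_zero_or_one _).resolve_left hv
    have hWeq : W = W ⊓ LinearMap.ker φ ⊔ span (ZMod 2) {v} := by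
      refine le_antisymm (fun w hw => ?_)
        (sup_le inf_le_left ((span_singleton_le_iff_mem _ _).mpr hvW))
      rw [← SetLike.mem_coe, coe_sup_span_singleton]
      obtain hw0 | hw1 := zmod2_eq_zero_or_one (φ w)
      · exact Or.inl ⟨hw, hw0⟩
      · refine Or.inr ⟨v + w, ⟨add_mem hvW hw, ?_⟩, ?_⟩
        · rw [SetLike.mem_coe, LinearMap.mem_ker, map_add, hv1, hw1]
          rfl
        · change v + (v + w) = w
          rw [← add_assoc, ZModModule.add_self, zero_add]
    conv_lhs => rw [hWeq]
    exact ncard_sup_span_singleton fun h => hv (mem_inf.mp h).2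

end Cosets

section Splitting

variable {V : Type*} [AddCommGroup V] [Module (ZMod 2) V] (Q : QuadraticForm (ZMod 2) V)

noncomputable def levelCount (a b c : V) (W : Submodule (ZMod 2) V) : ℕ :=
  ((a + ·) '' (W : Set V) ∩ {x | Q x = 1}).ncard
    + ((a + b + ·) '' (W : Set V) ∩ {x | Q x = 1}).ncard
    + ((a + c + ·) '' (W : Set V) ∩ {x | Q x = 1}).ncard
    + ((a + b + c + ·) '' (W : Set V) ∩ {x | Q x = 0}).ncard

-- `(Q y).val` and `(Q y + 1).val` are the indicators of `Q y = 1` and of `Q y = 0`.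
def blockCount (y b c : V) : ℕ :=
  (Q y).val + (Q (y + b)).val + (Q (y + c)).val + (Q (y + b + c) + 1).val

def AffineSplitting (n m : ℕ) : Prop :=
  ∃ B₁ B₂ : Set V, Disjoint B₁ B₂ ∧ (B₁ = ∅ ∨ IsAffineSubspace B₁) ∧
    (B₂ = ∅ ∨ IsAffineSubspace B₂) ∧ n = B₁.ncard + 2 * (B₂ ∩ {x | Q x = 1}).ncard ∧
    B₁.ncard + B₂.ncard = 2 * m

def polarKerInf (b c : V) (W : Submodule (ZMod 2) V) : Submodule (ZMod 2) V :=
  W ⊓ LinearMap.ker (polarBilin Q b) ⊓ LinearMap.ker (polarBilin Q c)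

variable {Q} {a b c : V} {W : Submodule (ZMod 2) V}

theorem mem_polarKerInf {x : V} :
    x ∈ polarKerInf Q b c W ↔ x ∈ W ∧ polar Q b x = 0 ∧ polar Q c x = 0 := by
  simp [polarKerInf, and_assoc]

theorem ncard_eq_mul_ncard_polarKerInf [Finite V] :
    (W : Set V).ncard = (polarKerInf Q b c W : Set V).ncard ∨
      (W : Set V).ncard = 2 * (polarKerInf Q b c W : Set V).ncard ∨
      (W : Set V).ncard = 4 * (polarKerInf Q b c W : Set V).ncard := by
  rcases ncard_eq_or_eq_two_mul_ncard_inf_ker W (polarBilin Q b) with h₁ | h₁ <;>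
    rcases ncard_eq_or_eq_two_mul_ncard_inf_ker (W ⊓ LinearMap.ker (polarBilin Q b))
      (polarBilin Q c) with h₂ | h₂ <;>
    simp only [polarKerInf] <;> omega

variable (Q)

theorem levelCount_add_of_mem {w : V} (hw : w ∈ W) (a b c : V) :
    levelCount Q (a + w) b c W = levelCount Q a b c W := by
  rw [levelCount, levelCount, add_right_comm a w b, add_right_comm a w c,
    add_right_comm (a + b) w c]
  simp only [image_add_add_of_mem hw]

open Classical in
theorem levelCount_eq_sum [Fintype V] (a b c : V) (W : Submodule (ZMod 2) V) :
    levelCount Q a b c W = ∑ x, if x ∈ W then blockCount Q (a + x) b c else 0 := by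
  have hR : {x | Q x = 0} = {x | Q x + 1 = 1} := by
    ext x
    simp
  have hinj : ∀ p : V, Set.InjOn (p + ·) (W : Set V) := fun p => (add_right_injective p).injOn
  rw [levelCount, hR]
  simp only [Set.ncard_image_inter_eq_sum (hinj _), ← Finset.sum_add_distrib]
  refine Finset.sum_congr rfl fun x _ => ?_
  rw [add_right_comm (a + b) c x, add_right_comm a b x, add_right_comm a c x]
  by_cases hx : x ∈ W <;> simp [hx, blockCount]

theorem blockCount_of_polar_eq_zero (h : polar Q b c = 0) (y : V) :
    blockCount Q y b c = 1 + 2 * (Q (y + (Q (y + b) - Q y) • c)).val := by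
  have hsmul : ∀ t : ZMod 2, Q (y + t • c) = Q y + t * (Q (y + c) - Q y) := by
    intro t
    obtain rfl | rfl := zmod2_eq_zero_or_one t <;> simp
  rw [blockCount, Q.apply_add_add, h, hsmul]
  generalize Q y = z₀, Q (y + b) = z₁, Q (y + c) = z₂
  revert z₀ z₁ z₂
  decide

theorem blockCount_of_polar_eq_one (h : polar Q b c = 1) (y : V) :
    blockCount Q y b c = if Q (y + b) = Q y ∧ Q (y + c) = Q y then 4 * (Q y).val else 2 := by
  rw [blockCount, Q.apply_add_add, h]
  generalize Q y = z₀, Q (y + b) = z₁, Q (y + c) = z₂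
  revert z₀ z₁ z₂
  decide

variable {Q} [Fintype V]

theorem affineSplitting_of_polar_eq_zero (hc : c ∉ W) (h : polar Q b c = 0) :
    AffineSplitting Q (levelCount Q a b c W) (W : Set V).ncard := by
  classical
  let τ := LinearEquiv.transvection (f := polarBilin Q b) (v := c) h
  have hτ : ∀ x, τ x = x + polar Q b x • c := fun x => rfl
  have hτc : τ c = c := by rw [hτ, h, zero_smul, add_zero]
  let M := W.map (τ : V →ₗ[ZMod 2] V)
  have hM : (M : Set V) = τ '' W := Submodule.map_coe _ _
  have hcM : c ∉ M := by
    rintro ⟨x, hx, hxc⟩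
    exact hc (τ.injective (hxc.trans hτc.symm) ▸ hx)
  have hMcard : (M : Set V).ncard = (W : Set V).ncard := by
    rw [hM]
    exact Set.ncard_image_of_injective _ τ.injective
  let p := a + (Q (a + b) - Q a) • c
  refine ⟨(p + c + ·) '' M, (p + ·) '' M, ((disjoint_image_add_iff p).mpr hcM).symm,
    .inr ⟨_, _, rfl⟩, .inr ⟨_, _, rfl⟩, ?_, ?_⟩
  · have hB₂ : ((p + ·) '' ↑M ∩ {x | Q x = 1}).ncard
        = ∑ x, if x ∈ W then (Q (p + τ x)).val else 0 := by
      rw [hM, Set.image_image]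
      exact Set.ncard_image_inter_eq_sum ((add_right_injective p).comp τ.injective).injOn _
    rw [levelCount_eq_sum, hB₂, Set.ncard_image_of_injective _ (add_right_injective _), hMcard,
      Set.ncard_eq_sum_ite, Finset.mul_sum, ← Finset.sum_add_distrib]
    refine Finset.sum_congr rfl fun x _ => ?_
    by_cases hx : x ∈ W
    · have hshear : a + x + (Q (a + x + b) - Q (a + x)) • c = p + τ x := by
        rw [Q.apply_add_add, polar_comm, hτ]
        module
      simp [hx, blockCount_of_polar_eq_zero Q h, hshear]
    · simp [hx]
  · rw [Set.ncard_image_of_injective _ (add_right_injective _),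
      Set.ncard_image_of_injective _ (add_right_injective _), hMcard, two_mul]

theorem affineSplitting_of_polar_eq_one_of_forall (hb : b ∉ W) (h : polar Q b c = 1)
    (hW : ∀ x ∈ W, Q (a + x + b) = Q (a + x) → Q (a + x + c) ≠ Q (a + x)) :
    AffineSplitting Q (levelCount Q a b c W) (W : Set V).ncard := by
  classical
  refine ⟨(a + ·) '' ((W ⊔ span (ZMod 2) {b} : Submodule (ZMod 2) V) : Set V), ∅, by simp,
    .inr ⟨_, _, rfl⟩, .inl rfl, ?_, ?_⟩ <;>
    rw [Set.ncard_image_of_injective _ (add_right_injective a), ncard_sup_span_singleton hb]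
  · rw [Set.empty_inter, Set.ncard_empty, mul_zero, add_zero, levelCount_eq_sum,
      Set.ncard_eq_sum_ite, Finset.mul_sum]
    refine Finset.sum_congr rfl fun x _ => ?_
    by_cases hx : x ∈ W
    · rw [if_pos hx, if_pos (SetLike.mem_coe.mpr hx), blockCount_of_polar_eq_one Q h,
        if_neg (not_and.mpr (hW x hx)), mul_one]
    · simp [hx]
  · simp

theorem levelCount_add_two_mul_ncard_polarKerInf (hQb : Q (a + b) = Q a)
    (hQc : Q (a + c) = Q a) (h : polar Q b c = 1) :
    levelCount Q a b c W + 2 * (polarKerInf Q b c W : Set V).ncard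
      = 2 * (W : Set V).ncard
        + 4 * ((a + ·) '' ↑(polarKerInf Q b c W) ∩ {x | Q x = 1}).ncard := by
  classical
  rw [levelCount_eq_sum, Set.ncard_eq_sum_ite, Set.ncard_eq_sum_ite,
    Set.ncard_image_inter_eq_sum (add_right_injective a).injOn, Finset.mul_sum, Finset.mul_sum,
    Finset.mul_sum, ← Finset.sum_add_distrib, ← Finset.sum_add_distrib]
  refine Finset.sum_congr rfl fun x _ => ?_
  rw [blockCount_of_polar_eq_one Q h, Q.apply_add_add_of_apply_add_eq hQb,
    Q.apply_add_add_of_apply_add_eq hQc]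
  simp only [SetLike.mem_coe, mem_polarKerInf, add_eq_left]
  by_cases hx : x ∈ W <;> by_cases hbx : polar Q b x = 0 <;> by_cases hcx : polar Q c x = 0 <;>
    simp [hx, hbx, hcx, add_comm]

theorem ncard_image_add_sup_span_inter_eq_two_mul {M : Submodule (ZMod 2) V} (hbM : b ∉ M)
    (hQb : Q (a + b) = Q a) (hM : ∀ x ∈ M, polar Q b x = 0) :
    ((a + ·) '' ↑(M ⊔ span (ZMod 2) {b}) ∩ {x | Q x = 1}).ncard
      = 2 * ((a + ·) '' ↑M ∩ {x | Q x = 1}).ncard := by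
  classical
  rw [ncard_image_add_sup_span_inter hbM, two_mul]
  congr 1
  rw [Set.ncard_image_inter_eq_sum (add_right_injective _).injOn,
    Set.ncard_image_inter_eq_sum (add_right_injective _).injOn]
  refine Finset.sum_congr rfl fun x _ => ?_
  split_ifs with hx
  · rw [add_right_comm, Q.apply_add_add_of_apply_add_eq hQb, hM x hx, add_zero]
  · rfl

theorem ncard_image_add_sup_span_sup_span_inter {M : Submodule (ZMod 2) V} (hbM : b ∉ M)
    (hcM : c ∉ M ⊔ span (ZMod 2) {b}) (hQb : Q (a + b) = Q a) (hQc : Q (a + c) = Q a)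
    (h : polar Q b c = 1) (hM : ∀ x ∈ M, polar Q b x = 0 ∧ polar Q c x = 0) :
    ((a + ·) '' ↑(M ⊔ span (ZMod 2) {b} ⊔ span (ZMod 2) {c}) ∩ {x | Q x = 1}).ncard
      = 2 * ((a + ·) '' ↑M ∩ {x | Q x = 1}).ncard + (M : Set V).ncard := by
  classical
  rw [ncard_image_add_sup_span_inter hcM, ncard_image_add_sup_span_inter_eq_two_mul hbM hQb
    fun x hx => (hM x hx).1, ncard_image_add_sup_span_inter hbM]
  congr 1
  rw [Set.ncard_image_inter_eq_sum (add_right_injective _).injOn,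
    Set.ncard_image_inter_eq_sum (add_right_injective _).injOn, Set.ncard_eq_sum_ite,
    ← Finset.sum_add_distrib]
  refine Finset.sum_congr rfl fun x _ => ?_
  split_ifs with hx
  · have hbx : Q (a + x + b) = Q (a + x) := by
      rw [Q.apply_add_add_of_apply_add_eq hQb, (hM x hx).1, add_zero]
    have hcx : Q (a + x + c) = Q (a + x) := by
      rw [Q.apply_add_add_of_apply_add_eq hQc, (hM x hx).2, add_zero]
    have hcbx : Q (a + x + c + b) = Q (a + x) + 1 := by
      rw [Q.apply_add_add, hcx, hbx, polar_comm, h]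
      ring
    rw [add_right_comm (a + c) b x, add_right_comm a c x, hcx, hcbx]
    generalize Q (a + x) = z
    revert z
    decide
  · rfl

theorem affineSplitting_of_polar_eq_one_of_apply_add_eq (hb : b ∉ W) (hc : c ∉ W)
    (hbc : b + c ∉ W) (hQb : Q (a + b) = Q a) (hQc : Q (a + c) = Q a) (h : polar Q b c = 1) :
    AffineSplitting Q (levelCount Q a b c W) (W : Set V).ncard := by
  set U := polarKerInf Q b c W
  have hUW : U ≤ W := inf_le_left.trans inf_le_left
  have hU : ∀ x ∈ U, polar Q b x = 0 ∧ polar Q c x = 0 := fun x hx => (mem_polarKerInf.mp hx).2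
  have hbU : b ∉ U := fun hbU => hb (hUW hbU)
  have hcU : c ∉ U ⊔ span (ZMod 2) {b} :=
    fun hcU => notMem_sup_span_singleton hc hbc (sup_le_sup_right hUW _ hcU)
  set M := U ⊔ span (ZMod 2) {b} ⊔ span (ZMod 2) {c}
  have hMcard : (M : Set V).ncard = 4 * (U : Set V).ncard := by
    rw [ncard_sup_span_singleton hcU, ncard_sup_span_singleton hbU]
    ring
  have hN : levelCount Q a b c W + 2 * (U : Set V).ncard
      = 2 * (W : Set V).ncard + 4 * ((a + ·) '' ↑U ∩ {x | Q x = 1}).ncard :=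
    levelCount_add_two_mul_ncard_polarKerInf hQb hQc h
  have hII : ((a + ·) '' ↑M ∩ {x | Q x = 1}).ncard
      = 2 * ((a + ·) '' ↑U ∩ {x | Q x = 1}).ncard + (U : Set V).ncard :=
    ncard_image_add_sup_span_sup_span_inter hbU hcU hQb hQc h hU
  have hcard : ∀ (p : V) (N : Submodule (ZMod 2) V),
      ((p + ·) '' (N : Set V)).ncard = (N : Set V).ncard :=
    fun p N => Set.ncard_image_of_injective _ (add_right_injective p)
  obtain hW | hW | hW : (W : Set V).ncard = (U : Set V).ncard ∨
      (W : Set V).ncard = 2 * (U : Set V).ncard ∨ (W : Set V).ncard = 4 * (U : Set V).ncard :=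
    ncard_eq_mul_ncard_polarKerInf
  · have hI := ncard_image_add_sup_span_inter_eq_two_mul hbU hQb fun x hx => (hU x hx).1
    refine ⟨∅, (a + ·) '' ↑(U ⊔ span (ZMod 2) {b}), by simp, .inl rfl, .inr ⟨_, _, rfl⟩, ?_, ?_⟩
    · rw [Set.ncard_empty, zero_add]
      omega
    · rw [Set.ncard_empty, hcard, ncard_sup_span_singleton hbU]
      omega
  · refine ⟨∅, (a + ·) '' ↑M, by simp, .inl rfl, .inr ⟨_, _, rfl⟩, ?_, ?_⟩
    · rw [Set.ncard_empty, zero_add]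
      omega
    · rw [Set.ncard_empty, hcard, hMcard]
      omega
  · have hUpos : 0 < (U : Set V).ncard := (Set.ncard_pos (Set.toFinite _)).mpr ⟨0, U.zero_mem⟩
    have hUW' : U < W := lt_of_le_of_ne hUW fun hUW' => by rw [hUW'] at hW hUpos; omega
    obtain ⟨v, hvW, hvM⟩ := exists_mem_notMem_sup_span_sup_span hUW' hb hc hbc
    refine ⟨(a + v + ·) '' ↑M, (a + ·) '' ↑M, ((disjoint_image_add_iff a).mpr hvM).symm,
      .inr ⟨_, _, rfl⟩, .inr ⟨_, _, rfl⟩, ?_, ?_⟩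
    · rw [hcard, hMcard]
      omega
    · rw [hcard, hcard, hMcard]
      omega

theorem exists_affineSplitting (Q : QuadraticForm (ZMod 2) V) (a b c : V)
    (W : Submodule (ZMod 2) V) (hb : b ∉ W) (hc : c ∉ W) (hbc : b + c ∉ W) :
    AffineSplitting Q (levelCount Q a b c W) (W : Set V).ncard := by
  obtain h | h := zmod2_eq_zero_or_one (polar Q b c)
  · exact affineSplitting_of_polar_eq_zero hc h
  · by_cases hE : ∃ w ∈ W, Q (a + w + b) = Q (a + w) ∧ Q (a + w + c) = Q (a + w)
    · obtain ⟨w, hw, hwb, hwc⟩ := hE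
      rw [← levelCount_add_of_mem Q hw]
      exact affineSplitting_of_polar_eq_one_of_apply_add_eq hb hc hbc hwb hwc h
    · simp only [not_exists, not_and] at hE
      exact affineSplitting_of_polar_eq_one_of_forall hb h hE

end Splitting

def hyperbolicForm (k : ℕ) : QuadraticForm (ZMod 2) (Fin (2 * k) → ZMod 2) :=
  ∑ i : Fin k, linMulLin (LinearMap.proj ⟨i, by omega⟩) (LinearMap.proj ⟨k + i, by omega⟩)

theorem hyperbolicForm_apply (k : ℕ) (x : Fin (2 * k) → ZMod 2) :
    hyperbolicForm k x = qForm k x := by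
  simp [hyperbolicForm, qForm, linMulLin_apply]

theorem stmt_7_general (k : ℕ) (a b c : Fin (2 * k) → ZMod 2)
    (W : Submodule (ZMod 2) (Fin (2 * k) → ZMod 2))
    (hdisj : ([(a + ·) '' (W : Set _), (a + b + ·) '' (W : Set _),
        (a + c + ·) '' (W : Set _), (a + b + c + ·) '' (W : Set _)] :
        List (Set (Fin (2 * k) → ZMod 2))).Pairwise Disjoint) :
    ∃ B₁ B₂ : Set (Fin (2 * k) → ZMod 2),
      Disjoint B₁ B₂ ∧
      (B₁ = ∅ ∨ IsAffineSubspace B₁) ∧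
      (B₂ = ∅ ∨ IsAffineSubspace B₂) ∧
      ((a + ·) '' (W : Set _) ∩ Sset k).ncard
          + ((a + b + ·) '' (W : Set _) ∩ Sset k).ncard
          + ((a + c + ·) '' (W : Set _) ∩ Sset k).ncard
          + ((a + b + c + ·) '' (W : Set _) ∩ Rset k).ncard
        = B₁.ncard + 2 * (B₂ ∩ Sset k).ncard ∧
      B₁.ncard + B₂.ncard = 2 * (W : Set (Fin (2 * k) → ZMod 2)).ncard := by
  have hdisj₀ := (List.pairwise_cons.mp hdisj).1
  have hb : b ∉ W := (disjoint_image_add_iff a).mp (hdisj₀ _ (by simp))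
  have hc : c ∉ W := (disjoint_image_add_iff a).mp (hdisj₀ _ (by simp))
  have hbc : b + c ∉ W := by
    have h := hdisj₀ ((a + b + c + ·) '' (W : Set _)) (by simp)
    rw [add_assoc a b c] at h
    exact (disjoint_image_add_iff a).mp h
  have hsplit := exists_affineSplitting (hyperbolicForm k) a b c W hb hc hbc
  simp only [AffineSplitting, levelCount, hyperbolicForm_apply] at hsplit
  exact hsplit

theorem stmt_7 (k : ℕ) (hk : 0 < k) (a b c : Fin (2 * k) → ZMod 2)
    (W : Submodule (ZMod 2) (Fin (2 * k) → ZMod 2))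
    (hdisj : ([(a + ·) '' (W : Set _), (a + b + ·) '' (W : Set _),
        (a + c + ·) '' (W : Set _), (a + b + c + ·) '' (W : Set _)] :
        List (Set (Fin (2 * k) → ZMod 2))).Pairwise Disjoint) :
    ∃ B₁ B₂ : Set (Fin (2 * k) → ZMod 2),
      Disjoint B₁ B₂ ∧
      (B₁ = ∅ ∨ IsAffineSubspace B₁) ∧
      (B₂ = ∅ ∨ IsAffineSubspace B₂) ∧
      ((a + ·) '' (W : Set _) ∩ Sset k).ncard
          + ((a + b + ·) '' (W : Set _) ∩ Sset k).ncard
          + ((a + c + ·) '' (W : Set _) ∩ Sset k).ncard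
          + ((a + b + c + ·) '' (W : Set _) ∩ Rset k).ncard
        = B₁.ncard + 2 * (B₂ ∩ Sset k).ncard ∧
      B₁.ncard + B₂.ncard = 2 * (W : Set (Fin (2 * k) → ZMod 2)).ncard :=
  stmt_7_general k a b c W hdisj
end

section
/- Let n and k be positive integers and let d₁, ..., d_k and s₁, ..., s_k be positive integers (d_i ≥ 1 and s_i ≥ 1 for all i) satisfying Σ_{i=1}^k s_i ≤ Σ_{i=1}^k d_i ≤ ⌊n/2⌋ + 1. Then, setting d₀ = 0, the total cycle count satisfies Σ_{i=1}^k (2·d_i + s_i + d_{i-1} + 2) ≤ 6·⌊n/2⌋ + 5. -/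
/-!
Write `D = ∑ dᵢ`. The cycle count is `2D + ∑ sᵢ + ∑ dᵢ₋₁ + 2k`. Since `d₀ = 0`, the shifted
sum `∑ dᵢ₋₁` is `D - d_k ≤ D - 1`; moreover `∑ sᵢ ≤ D` and `k ≤ D` because every `dᵢ ≥ 1`.
Hence the count is at most `6D - 1 ≤ 6(⌊n/2⌋ + 1) - 1`.
-/

open Finset

theorem Finset.sum_Icc_one_pred_add {M : Type*} [AddCommMonoid M] (f : ℕ → M) (k : ℕ) :
    ∑ i ∈ Icc 1 k, f (i - 1) + f k = f 0 + ∑ i ∈ Icc 1 k, f i := by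
  induction k with
  | zero => simp
  | succ k ih =>
    rw [sum_Icc_succ_top (by omega), sum_Icc_succ_top (by omega), Nat.add_sub_cancel, ih,
      add_assoc]

theorem Finset.card_Icc_one_le_sum {f : ℕ → ℕ} {k : ℕ} (hf : ∀ i ∈ Icc 1 k, 1 ≤ f i) :
    k ≤ ∑ i ∈ Icc 1 k, f i := by
  simpa using card_nsmul_le_sum (Icc 1 k) f 1 hf

theorem stmt_16_general (n k : ℕ) (hk : 0 < k)
    (d s : ℕ → ℕ) (hd0 : d 0 = 0)
    (hd : ∀ i ∈ Finset.Icc 1 k, 1 ≤ d i)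
    (hsd : ∑ i ∈ Finset.Icc 1 k, s i ≤ ∑ i ∈ Finset.Icc 1 k, d i)
    (hdsum : ∑ i ∈ Finset.Icc 1 k, d i ≤ n / 2 + 1) :
    ∑ i ∈ Finset.Icc 1 k, (2 * d i + s i + d (i - 1) + 2) ≤ 6 * (n / 2) + 5 := by
  have hcount : ∑ i ∈ Icc 1 k, (2 * d i + s i + d (i - 1) + 2) =
      2 * ∑ i ∈ Icc 1 k, d i + ∑ i ∈ Icc 1 k, s i + ∑ i ∈ Icc 1 k, d (i - 1) + 2 * k := by
    simp only [sum_add_distrib, ← mul_sum, sum_const, Nat.card_Icc, Nat.add_sub_cancel, smul_eq_mul]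
    ring
  have hshift := sum_Icc_one_pred_add d k
  have hdk : 1 ≤ d k := hd k (mem_Icc.mpr ⟨hk, le_rfl⟩)
  have hkd := card_Icc_one_le_sum hd
  omega

theorem stmt_16 (n k : ℕ) (hn : 0 < n) (hk : 0 < k)
    (d s : ℕ → ℕ) (hd0 : d 0 = 0)
    (hd : ∀ i ∈ Finset.Icc 1 k, 1 ≤ d i) (hs : ∀ i ∈ Finset.Icc 1 k, 1 ≤ s i)
    (hsd : ∑ i ∈ Finset.Icc 1 k, s i ≤ ∑ i ∈ Finset.Icc 1 k, d i)
    (hdsum : ∑ i ∈ Finset.Icc 1 k, d i ≤ n / 2 + 1) :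
    ∑ i ∈ Finset.Icc 1 k, (2 * d i + s i + d (i - 1) + 2) ≤ 6 * (n / 2) + 5 :=
  stmt_16_general n k hk d s hd0 hd hsd hdsum
end
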